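/- arXiv:1501.02721 — 8 statements merged into one kernel-verified Lean document; each statement's English description precedes it below -/
import Mathlib

section
/- Let K be a field and M a nonzero K-subspace of n×n matrices over K. Let A ∈ M have maximal rank r among elements of M, and suppose |K| ≥ r + 1. Then for every u in the kernel of A and every B ∈ M, the vector B·u lies in the image (column space) of A. -/
/-!
If `g u ∉ range f` for some `u ∈ ker f`, pick a retraction `π : W → range f` killing `g u` and a
section `σ : range f → V` of `f`. For `μ` not an eigenvalue of `π ∘ g ∘ σ` (it exists because `K`
has more than `rank f` elements), the map `(y, t) ↦ (g - μ f) (σ y + t u)` is injective on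
`range f × K`, so `g - μ f` has rank at least `rank f + 1`.
-/

open Module Cardinal LinearMap

theorem Submodule.exists_retraction_apply_eq_zero {K W : Type*} [Field K]
    [AddCommGroup W] [Module K W] {p : Submodule K W} {x : W} (hx : x ∉ p) :
    ∃ π : W →ₗ[K] p, (∀ y : p, π y = y) ∧ π x = 0 := by
  have hx0 : x ≠ 0 := fun h => hx (h ▸ p.zero_mem)
  have hinj : ker (p.subtype.coprod (toSpanSingleton K W x)) = ⊥ := by
    rw [ker_coprod_of_disjoint_range, Submodule.ker_subtype, ker_toSpanSingleton K hx0,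
      Submodule.prod_bot]
    rw [Submodule.range_subtype, range_toSpanSingleton]
    exact Submodule.disjoint_span_singleton_of_notMem hx
  obtain ⟨L, hL⟩ := (p.subtype.coprod (toSpanSingleton K W x)).exists_leftInverse_of_injective hinj
  refine ⟨LinearMap.fst K p K ∘ₗ L, ?_, ?_⟩
  · intro y
    simpa using congr_arg Prod.fst (LinearMap.congr_fun hL (y, 0))
  · simpa using congr_arg Prod.fst (LinearMap.congr_fun hL (0, 1))

theorem Module.End.exists_not_hasEigenvalue {K E : Type*} [Field K] [AddCommGroup E] [Module K E]
    [FiniteDimensional K E] (c : End K E) (hK : (finrank K E : Cardinal) < #K) :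
    ∃ μ, ¬ c.HasEigenvalue μ := by
  obtain ⟨μ, hμ⟩ := c.charpoly.exists_eval_ne_zero_of_natDegree_lt_card c.charpoly_monic.ne_zero
    (by rwa [charpoly_natDegree])
  exact ⟨μ, fun h => hμ (c.hasEigenvalue_iff_isRoot_charpoly μ |>.mp h)⟩

theorem LinearMap.map_ker_le_range_of_finrank_range_smul_add_le {K V W : Type*} [Field K]
    [AddCommGroup V] [Module K V] [AddCommGroup W] [Module K W] [FiniteDimensional K W]
    (f g : V →ₗ[K] W) (hK : (finrank K (range f) : Cardinal) < #K)
    (hrank : ∀ s : K, finrank K (range (s • f + g)) ≤ finrank K (range f)) :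
    (ker f).map g ≤ range f := by
  rintro _ ⟨u, hu, rfl⟩
  by_contra hgu
  have hgu0 : g u ≠ 0 := fun h => hgu (h ▸ (range f).zero_mem)
  obtain ⟨π, hπ, hπu⟩ := Submodule.exists_retraction_apply_eq_zero hgu
  obtain ⟨σ, hσ⟩ := f.rangeRestrict.exists_rightInverse_of_surjective f.range_rangeRestrict
  obtain ⟨μ, hμ⟩ := Module.End.exists_not_hasEigenvalue (π ∘ₗ g ∘ₗ σ) hK
  set D := (-μ) • f + g
  have hfσ : ∀ y, f (σ y) = y := fun y => congr_arg Subtype.val (LinearMap.congr_fun hσ y)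
  have hπD : ∀ y, π (D (σ y)) = π (g (σ y)) - μ • y := by
    intro y
    simp only [D, add_apply, smul_apply, neg_smul, neg_apply, map_add, map_neg, map_smul, hfσ, hπ]
    abel
  have hker : ker (D ∘ₗ σ.coprod (toSpanSingleton K V u)) = ⊥ := by
    rw [ker_eq_bot']
    rintro ⟨y, t⟩ h
    have hDu : D u = g u := by simp [D, mem_ker.mp hu]
    simp only [comp_apply, coprod_apply, toSpanSingleton_apply, map_add, map_smul, hDu] at h
    have hy : (π ∘ₗ g ∘ₗ σ) y = μ • y := by
      simpa [hπD, hπu, sub_eq_zero] using congr_arg π h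
    obtain rfl : y = 0 := by
      by_contra hy0
      exact hμ (End.hasEigenvalue_of_hasEigenvector ⟨End.mem_eigenspace_iff.mpr hy, hy0⟩)
    obtain rfl : t = 0 := by simpa [hgu0] using h
    rfl
  have hle := Submodule.finrank_mono (range_comp_le_range (σ.coprod (toSpanSingleton K V u)) D)
  rw [finrank_range_of_inj (ker_eq_bot.mp hker), finrank_prod, finrank_self] at hle
  exact absurd (hle.trans (hrank (-μ))) (by omega)

theorem stmt0_general (K : Type*) [Field K] (n r : ℕ)
    (M : Submodule K (Matrix (Fin n) (Fin n) K))
    (A : Matrix (Fin n) (Fin n) K) (hA : A ∈ M) (hrA : A.rank = r)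
    (hmax : ∀ B ∈ M, Matrix.rank B ≤ r)
    (hK : (r + 1 : Cardinal) ≤ Cardinal.mk K)
    (u : Fin n → K) (hu : A.mulVec u = 0)
    (B : Matrix (Fin n) (Fin n) K) (hB : B ∈ M) :
    B.mulVec u ∈ LinearMap.range A.mulVecLin := by
  have hrank : ∀ s : K, finrank K (range (s • A.mulVecLin + B.mulVecLin)) ≤ A.rank := by
    intro s
    rw [Matrix.mulVecLin, ← map_smul, ← map_add, hrA]
    exact hmax _ (M.add_mem (M.smul_mem s hA) hB)
  have hcard : (A.rank : Cardinal) < #K := by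
    rw [hrA]
    exact lt_of_lt_of_le (by exact_mod_cast r.lt_succ_self) hK
  exact A.mulVecLin.map_ker_le_range_of_finrank_range_smul_add_le B.mulVecLin hcard hrank
    ⟨u, hu, rfl⟩

/-- Let K be a field and M a nonzero K-subspace of n×n matrices over K.
Let A ∈ M have maximal rank r among elements of M, and suppose |K| ≥ r + 1.
Then for every u in the kernel of A and every B ∈ M, the vector Bu lies in the
image (column space) of A. -/
theorem stmt0 (K : Type*) [Field K] (n r : ℕ)
    (M : Submodule K (Matrix (Fin n) (Fin n) K)) (hM : M ≠ ⊥)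
    (A : Matrix (Fin n) (Fin n) K) (hA : A ∈ M) (hrA : A.rank = r)
    (hmax : ∀ B ∈ M, Matrix.rank B ≤ r)
    (hK : (r + 1 : Cardinal) ≤ Cardinal.mk K)
    (u : Fin n → K) (hu : A.mulVec u = 0)
    (B : Matrix (Fin n) (Fin n) K) (hB : B ∈ M) :
    B.mulVec u ∈ LinearMap.range A.mulVecLin :=
  stmt0_general K n r M A hA hrA hmax hK u hu B hB
end

section
/- Let K be a field with |K| ≥ r + 1 and M a constant rank r subspace of M_n(K) with dim M = n + 1. Then for every nonzero u ∈ K^n, the subspace K_u = {A ∈ M : Au = 0} has dimension at least n + 1 − r. -/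
/-- The linear map `A ↦ A.mulVec u` on matrices. -/
def mulVecRight (K : Type*) [Field K] (n : ℕ) (u : Fin n → K) :
    Matrix (Fin n) (Fin n) K →ₗ[K] (Fin n → K) where
  toFun A := A.mulVec u
  map_add' A B := Matrix.add_mulVec A B u
  map_smul' c A := by simp [Matrix.smul_mulVec]

/-!
Since `dim M > n`, some nonzero `A ∈ M` kills `u`, and it suffices to show `B u ∈ range A` for
every `B ∈ M`: then `B ↦ B u` maps `M` into a space of dimension `r`. If `B u ∉ range A`, note
that `ker A` and `ker B` both have dimension `n - r` and `u ∈ ker A \ ker B`, so some `z` has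
`B z = 0 ≠ A z`. Choose `v₁ = z, v₂, …, v_r` with `A vᵢ` independent. The `r + 1` vectors
`(A + t B) vᵢ` and `(A + t B) (t⁻¹ u) = B u` are independent unless `t` is a root of a determinant
that equals `1` at `t = 0` and has degree `≤ r - 1` (two of its columns do not depend on `t`).
As `|K| ≥ r + 1`, some `t ≠ 0` is not a root, and then `A + t B ∈ M` has rank `> r`.
-/

open Polynomial Module Cardinal
open scoped Matrix

theorem Matrix.natDegree_det_le_sum {R ι : Type*} [CommRing R] [Fintype ι] [DecidableEq ι]
    (N : Matrix ι ι R[X]) (d : ι → ℕ) (hd : ∀ i j, (N i j).natDegree ≤ d j) :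
    N.det.natDegree ≤ ∑ j, d j := by
  rw [Matrix.det_apply']
  refine natDegree_sum_le_of_forall_le _ _ fun σ _ => ?_
  refine natDegree_mul_le.trans ?_
  rw [natDegree_intCast, zero_add]
  exact (natDegree_prod_le _ _).trans (Finset.sum_le_sum fun j _ => hd (σ j) j)

theorem exists_ne_zero_linearIndependent_add_smul {K V ι : Type*} [Field K] [AddCommGroup V]
    [Module K V] [Fintype ι] [DecidableEq ι] {g h : ι → V} (hg : LinearIndependent K g)
    (s : Finset ι) (hs : ∀ j ∉ s, h j = 0) (hK : ((s.card + 1 : ℕ) : Cardinal) < #K) :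
    ∃ t : K, t ≠ 0 ∧ LinearIndependent K (g + t • h) := by
  obtain ⟨φ, hφ⟩ := (Fintype.linearCombination K g).exists_leftInverse_of_injective
    (LinearMap.ker_eq_bot.mpr (linearIndependent_iff_injective_fintypeLinearCombination.mp hg))
  have hφg : ∀ j, φ (g j) = Pi.single j 1 := fun j => by
    simpa using LinearMap.congr_fun hφ (Pi.single j 1)
  -- in the coordinates `φ`, the family `g + t • h` is the columns of `t • H + 1`
  set H : Matrix ι ι K := Matrix.of fun i j => φ (h j) i
  set N : Matrix ι ι K[X] := (X : K[X]) • H.map C + (1 : Matrix ι ι K).map C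
  have hN : ∀ i j, N i j = C (H i j) * X + C ((1 : Matrix ι ι K) i j) := fun i j => by
    simp only [N, Matrix.add_apply, Matrix.smul_apply, Matrix.map_apply, smul_eq_mul, mul_comm]
  have hp : N.det ≠ 0 := by
    have hp0 : N.det.coeff 0 = 1 := (coeff_det_X_add_C_zero H 1).trans Matrix.det_one
    exact fun hp => by rw [hp, coeff_zero] at hp0; exact zero_ne_one hp0
  have hdeg : (X * N.det).natDegree < #K := by
    have : N.det.natDegree ≤ s.card := by
      refine (Matrix.natDegree_det_le_sum _ (fun j => if j ∈ s then 1 else 0) fun i j => ?_).trans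
        (by simp)
      by_cases hj : j ∈ s
      · rw [if_pos hj, hN]; exact natDegree_linear_le
      · simp [hj, hN, H, hs j hj]
    rw [natDegree_X_mul hp]
    exact lt_of_le_of_lt (by exact_mod_cast (by omega : N.det.natDegree + 1 ≤ s.card + 1)) hK
  obtain ⟨t, ht⟩ := exists_eval_ne_zero_of_natDegree_lt_card _ (mul_ne_zero X_ne_zero hp) hdeg
  rw [eval_mul, eval_X] at ht
  have hdet : (t • H + 1).det ≠ 0 := by
    convert right_ne_zero_of_mul ht using 1
    rw [← coe_evalRingHom, RingHom.map_det]
    congr 1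
    ext i j
    rw [RingHom.mapMatrix_apply, Matrix.map_apply, hN]
    simp only [coe_evalRingHom, eval_add, eval_mul, eval_C, eval_X, Matrix.add_apply,
      Matrix.smul_apply, smul_eq_mul, mul_comm]
  have hcol : (t • H + 1).col = φ ∘ (g + t • h) := by
    ext j i
    simp [H, hφg, Matrix.one_apply, Pi.single_apply, eq_comm, add_comm]
  refine ⟨t, left_ne_zero_of_mul ht, LinearIndependent.of_comp φ ?_⟩
  rw [← hcol]
  exact Matrix.linearIndependent_cols_of_det_ne_zero hdet

namespace LinearMap

variable {K V W : Type*} [Field K] [AddCommGroup V] [Module K V] [FiniteDimensional K V]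
  [AddCommGroup W] [Module K W]

theorem exists_apply_eq_zero_apply_ne_zero {f g : V →ₗ[K] W}
    (hfg : finrank K (range g) ≤ finrank K (range f)) {u : V} (hfu : f u = 0) (hgu : g u ≠ 0) :
    ∃ z, g z = 0 ∧ f z ≠ 0 := by
  by_contra! h
  have hker : ker g = ker f := Submodule.eq_of_le_of_finrank_le (fun z hz => h z hz) (by
    have := f.finrank_range_add_finrank_ker
    have := g.finrank_range_add_finrank_ker
    omega)
  exact hgu (mem_ker.mp (hker ▸ mem_ker.mpr hfu))

theorem exists_linearIndependent_comp_of_apply_ne_zero {f : V →ₗ[K] W} {r : ℕ}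
    (hf : finrank K (range f) = r) {z : V} (hz : f z ≠ 0) :
    ∃ (v : Fin r → V) (i : Fin r), v i = z ∧ LinearIndependent K (f ∘ v) := by
  let b := Module.finBasisOfFinrankEq K (range f) hf
  choose v hv using fun i => mem_range.mp (b i).2
  have hfv : f ∘ v = (range f).subtype ∘ b := funext hv
  set l := b.repr ⟨f z, z, rfl⟩
  obtain ⟨i, hi⟩ : ∃ i, l i ≠ 0 := by
    by_contra! hl
    exact hz (congrArg Subtype.val (b.repr.map_eq_zero_iff.mp (Finsupp.ext hl)))
  refine ⟨Function.update v i z, i, Function.update_self .., ?_⟩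
  rw [Function.comp_update]
  refine (hfv ▸ b.linearIndependent.map' _ (range f).ker_subtype).update i (f z)
    ⟨1, one_mem _, l, mem_nonZeroDivisors_of_ne_zero hi, ?_⟩
  rw [one_smul, hfv, ← Finsupp.apply_linearCombination, b.linearCombination_repr]
  rfl

theorem card_le_finrank_range {ι : Type*} [Fintype ι] {f : V →ₗ[K] W} {x : ι → V}
    (hx : LinearIndependent K (f ∘ x)) : Fintype.card ι ≤ finrank K (range f) := by
  rw [← finrank_span_eq_card hx]
  refine Submodule.finrank_mono (Submodule.span_le.mpr ?_)
  rintro _ ⟨i, rfl⟩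
  exact mem_range_self f (x i)

theorem apply_mem_range_of_finrank_range_add_smul_le {r : ℕ} (hK : (r + 1 : Cardinal) ≤ #K)
    {f g : V →ₗ[K] W} (hf : finrank K (range f) = r) (hg : finrank K (range g) ≤ r)
    (hfg : ∀ t : K, t ≠ 0 → finrank K (range (f + t • g)) ≤ r) {u : V} (hfu : f u = 0) :
    g u ∈ range f := by
  by_contra hgu
  obtain ⟨z, hgz, hfz⟩ := exists_apply_eq_zero_apply_ne_zero (hf ▸ hg) hfu
    fun h => hgu (h ▸ Submodule.zero_mem _)
  obtain ⟨v, i, rfl, hv⟩ := exists_linearIndependent_comp_of_apply_ne_zero hf hfz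
  set x : Fin (r + 1) → W := Fin.snoc (f ∘ v) (g u)
  set y : Fin (r + 1) → W := Fin.snoc (g ∘ v) 0
  have hx : LinearIndependent K x := by
    refine linearIndependent_finSnoc.mpr ⟨hv, fun hmem => hgu ?_⟩
    refine Submodule.span_le.mpr ?_ hmem
    rintro _ ⟨j, rfl⟩
    exact mem_range_self f (v j)
  set s : Finset (Fin (r + 1)) := Finset.univ \ {i.castSucc, Fin.last r}
  have hy : ∀ j ∉ s, y j = 0 := by
    intro j hj
    obtain rfl | rfl : j = i.castSucc ∨ j = Fin.last r := by
      simpa [s, or_iff_not_imp_left] using hj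
    · simpa [y] using hgz
    · simp [y]
  have hs : s.card + 1 = r := by
    rw [Finset.card_sdiff_of_subset (Finset.subset_univ _), Finset.card_univ, Fintype.card_fin,
      Finset.card_pair (Fin.castSucc_lt_last i).ne]
    have := i.pos
    omega
  obtain ⟨t, ht, hxy⟩ := exists_ne_zero_linearIndependent_add_smul hx s hy
    (by rw [hs]; exact lt_of_lt_of_le (by exact_mod_cast Nat.lt_succ_self r) hK)
  have hcomp : (f + t • g) ∘ Fin.snoc v (t⁻¹ • u) = x + t • y := by
    ext j : 1
    refine Fin.lastCases ?_ (fun k => ?_) j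
    · simp [x, y, hfu, smul_smul, ht]
    · simp [x, y]
  have hcard := card_le_finrank_range (hcomp ▸ hxy)
  rw [Fintype.card_fin] at hcard
  have := hfg t ht
  omega

end LinearMap

theorem Submodule.finrank_map_add_finrank_inf_ker {K V W : Type*} [Field K] [AddCommGroup V]
    [Module K V] [AddCommGroup W] [Module K W] (p : Submodule K V) [FiniteDimensional K p]
    (φ : V →ₗ[K] W) :
    finrank K (p.map φ) + finrank K ↥(p ⊓ LinearMap.ker φ) = finrank K p := by
  have hker : LinearMap.ker (φ.domRestrict p) = comap p.subtype (p ⊓ LinearMap.ker φ) := by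
    rw [LinearMap.ker_domRestrict, comap_inf, comap_subtype_self, top_inf_eq]
  rw [← (φ.domRestrict p).finrank_range_add_finrank_ker, LinearMap.range_domRestrict, hker,
    (comapSubtypeEquivOfLe inf_le_left).finrank_eq]

theorem Matrix.mulVec_mem_range_of_forall_rank_le {K m o : Type*} [Field K] [Fintype o] {r : ℕ}
    (hK : (r + 1 : Cardinal) ≤ #K) {M : Submodule K (Matrix m o K)}
    (hM : ∀ C ∈ M, C.rank ≤ r) {A B : Matrix m o K} (hA : A ∈ M) (hAr : A.rank = r) (hB : B ∈ M)
    {u : o → K} (hAu : A *ᵥ u = 0) : B *ᵥ u ∈ LinearMap.range A.mulVecLin := by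
  refine LinearMap.apply_mem_range_of_finrank_range_add_smul_le hK hAr (hM B hB)
    (fun t _ => ?_) hAu
  have hlin : (A + t • B).mulVecLin = A.mulVecLin + t • B.mulVecLin := by
    simp only [← Matrix.toLin'_apply', map_add, map_smul]
  exact hlin ▸ hM _ (M.add_mem hA (M.smul_mem t hB))

theorem stmt1_general (K : Type*) [Field K] (n r : ℕ)
    (hK : (r + 1 : Cardinal) ≤ Cardinal.mk K)
    (M : Submodule K (Matrix (Fin n) (Fin n) K))
    (hconst : ∀ A ∈ M, A ≠ 0 → Matrix.rank A = r)
    (hdim : Module.finrank K M = n + 1)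
    (u : Fin n → K) :
    n + 1 - r ≤ Module.finrank K ↥(M ⊓ LinearMap.ker (mulVecRight K n u)) := by
  have hrank : ∀ C ∈ M, C.rank ≤ r := fun C hC => by
    rcases eq_or_ne C 0 with rfl | hC0
    · simp
    · exact (hconst C hC hC0).le
  have hsum := M.finrank_map_add_finrank_inf_ker (mulVecRight K n u)
  have himage : finrank K (M.map (mulVecRight K n u)) ≤ n :=
    (Submodule.finrank_le _).trans_eq (finrank_fin_fun K)
  have hker : M ⊓ LinearMap.ker (mulVecRight K n u) ≠ ⊥ :=
    Submodule.one_le_finrank_iff.mp (by omega)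
  obtain ⟨A, ⟨hAM, hAu⟩, hA0⟩ := Submodule.exists_mem_ne_zero_of_ne_bot hker
  have hle : M.map (mulVecRight K n u) ≤ LinearMap.range A.mulVecLin := by
    rintro _ ⟨B, hB, rfl⟩
    exact Matrix.mulVec_mem_range_of_forall_rank_le hK hrank hAM (hconst A hAM hA0) hB hAu
  have hAr : finrank K (LinearMap.range A.mulVecLin) = r := hconst A hAM hA0
  have := Submodule.finrank_mono hle
  omega

/-- Let K be a field with |K| ≥ r + 1 and M a constant rank r subspace of
M_n(K) with dim M = n + 1. Then for every nonzero u ∈ K^n, the subspace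
K_u = {A ∈ M : Au = 0} has dimension at least n + 1 − r. -/
theorem stmt1 (K : Type*) [Field K] (n r : ℕ) (hr1 : 1 ≤ r) (hrn : r ≤ n)
    (hK : (r + 1 : Cardinal) ≤ Cardinal.mk K)
    (M : Submodule K (Matrix (Fin n) (Fin n) K)) (hM : M ≠ ⊥)
    (hconst : ∀ A ∈ M, A ≠ 0 → Matrix.rank A = r)
    (hdim : Module.finrank K M = n + 1)
    (u : Fin n → K) (hu : u ≠ 0) :
    n + 1 - r ≤ Module.finrank K ↥(M ⊓ LinearMap.ker (mulVecRight K n u)) :=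
  stmt1_general K n r hK M hconst hdim u
end

section
/- Let q be a prime power and M a constant rank r subspace of M_n(F_q), where 1 ≤ r ≤ n, and suppose q ≥ r + 1. Then dim M ≤ n. -/
/-!
Suppose `d = dim M > n`. If a nonzero `A ∈ M` kills `v`, then `B v ∈ im A` for every `B ∈ M`:
otherwise one compresses the pencil `A + t B` to an `r × r` matrix `1 + t Y` with `det Y = 0`
whose determinant vanishes for every `t ≠ 0`; being a nonzero polynomial of degree `< r`, it
cannot have the `q - 1 ≥ r` roots. Since `d > n`, every `v` is killed by some nonzero `A ∈ M`,
so `B ↦ B v` has rank `≤ r` on `M` and at least `q ^ (d - r)` elements of `M` kill `v`, while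
each nonzero `B` kills exactly `q ^ (n - r)` vectors. Counting the pairs `(B, v)` with `B v = 0`
both ways gives `q ^ d + (q ^ n - 1) q ^ (d - r) ≤ q ^ n + (q ^ d - 1) q ^ (n - r)`, which is
false for `d > n ≥ r ≥ 1`.
-/

open Module Matrix Polynomial Finset

lemma Submodule.exists_linearMap_eq_self_of_notMem {K V : Type*} [Field K] [AddCommGroup V]
    [Module K V] {S : Submodule K V} {w : V} (hw : w ∉ S) :
    ∃ f : V →ₗ[K] S, (∀ s : S, f s = s) ∧ f w = 0 := by
  let ι := S.subtype.coprod (LinearMap.toSpanSingleton K V w)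
  have hdisj : Disjoint (LinearMap.range S.subtype)
      (LinearMap.range (LinearMap.toSpanSingleton K V w)) := by
    rw [range_subtype, LinearMap.range_toSpanSingleton, disjoint_span_singleton]
    exact fun h => absurd h hw
  have hw0 : w ≠ 0 := fun h => hw (h ▸ S.zero_mem)
  obtain ⟨g, hg⟩ := ι.exists_leftInverse_of_injective <| by
    simp [ι, LinearMap.ker_coprod_of_disjoint_range _ _ hdisj, LinearMap.ker_toSpanSingleton K hw0]
  refine ⟨LinearMap.fst K S K ∘ₗ g, fun s => ?_, ?_⟩
  · simpa [ι] using congr_arg Prod.fst (LinearMap.congr_fun hg (s, 0))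
  · simpa [ι] using congr_arg Prod.fst (LinearMap.congr_fun hg (0, 1))

lemma Matrix.exists_mul_mul_eq_one_and_mulVec_eq_zero {K m n : Type*} [Field K] [Fintype m]
    [Fintype n] [DecidableEq m] [DecidableEq n] {A : Matrix m n K} {w : m → K}
    (hw : w ∉ LinearMap.range A.mulVecLin) :
    ∃ (P : Matrix (Fin A.rank) m K) (U : Matrix n (Fin A.rank) K),
      P * A * U = 1 ∧ P *ᵥ w = 0 := by
  obtain ⟨f, hf, hfw⟩ := Submodule.exists_linearMap_eq_self_of_notMem hw
  let e : LinearMap.range A.mulVecLin ≃ₗ[K] (Fin A.rank → K) :=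
    LinearEquiv.ofFinrankEq _ _ (finrank_fin_fun K).symm
  let π := e.toLinearMap ∘ₗ f
  have hsurj : LinearMap.range (π ∘ₗ A.mulVecLin) = ⊤ := by
    refine LinearMap.range_eq_top.mpr fun y => ?_
    obtain ⟨v, hv⟩ := (e.symm y).2
    exact ⟨v, by simp [π, hv, hf]⟩
  obtain ⟨U, hU⟩ := (π ∘ₗ A.mulVecLin).exists_rightInverse_of_surjective hsurj
  refine ⟨LinearMap.toMatrix' π, LinearMap.toMatrix' U, ?_, ?_⟩
  · simpa [LinearMap.toMatrix'_comp, ← toLin'_apply'] using congr_arg LinearMap.toMatrix' hU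
  · rw [LinearMap.toMatrix'_mulVec]
    simp [π, hfw]

lemma Matrix.rank_mul_lt_of_mulVec_eq_zero {K k m n : Type*} [Field K] [Fintype m] [Fintype n]
    {P : Matrix k m K} {C : Matrix m n K} {v : n → K} (hv : C *ᵥ v ≠ 0)
    (hP : P *ᵥ (C *ᵥ v) = 0) : (P * C).rank < C.rank := by
  have hker : LinearMap.ker C.mulVecLin < LinearMap.ker (P * C).mulVecLin := by
    refine lt_of_le_of_ne (fun x hx => ?_) fun h => hv ?_
    · simp_all
    · have hvPC : v ∈ LinearMap.ker (P * C).mulVecLin := by simpa [← mulVec_mulVec] using hP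
      rw [← h] at hvPC
      simpa using hvPC
  have hC := LinearMap.finrank_range_add_finrank_ker C.mulVecLin
  have hPC := LinearMap.finrank_range_add_finrank_ker (P * C).mulVecLin
  have := Submodule.finrank_lt_finrank_of_lt hker
  rw [rank, rank]
  omega

lemma Matrix.det_mul_mul_eq_zero_of_mulVec_eq_zero {K ι m n : Type*} [Field K] [Fintype ι]
    [DecidableEq ι] [Fintype m] [Fintype n] {P : Matrix ι m K} {C : Matrix m n K}
    {U : Matrix n ι K} {v : n → K} (hv : C *ᵥ v ≠ 0) (hP : P *ᵥ (C *ᵥ v) = 0)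
    (hC : C.rank ≤ Fintype.card ι) : (P * C * U).det = 0 := by
  by_contra h
  have hunit := rank_of_isUnit _ ((isUnit_iff_isUnit_det _).mpr (isUnit_iff_ne_zero.mpr h))
  have := (P * C).rank_mul_le_left U
  have := rank_mul_lt_of_mulVec_eq_zero hv hP
  omega

lemma Matrix.exists_ne_zero_det_one_add_smul_ne_zero {K ι : Type*} [Field K] [Fintype K]
    [Fintype ι] [DecidableEq ι] {Y : Matrix ι ι K} (hY : Y.det = 0)
    (hcard : Fintype.card ι < Fintype.card K) :
    ∃ t : K, t ≠ 0 ∧ (1 + t • Y).det ≠ 0 := by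
  classical
  by_contra! h
  set p : K[X] := det ((X : K[X]) • Y.map C + (1 : Matrix ι ι K).map C)
  have hp0 : p.coeff 0 = 1 := by rw [coeff_det_X_add_C_zero, det_one]
  have hp : p ≠ 0 := fun h => by simp [h] at hp0
  have hdeg : p.natDegree < Fintype.card ι := by
    refine lt_of_le_of_ne (natDegree_det_X_add_C_le _ _) fun hd => hp ?_
    rw [← leadingCoeff_eq_zero, leadingCoeff, hd, coeff_det_X_add_C_card, hY]
  have heval : ∀ t, p.eval t = (1 + t • Y).det := by
    intro t
    rw [← coe_evalRingHom, RingHom.map_det]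
    congr 1
    ext i j
    by_cases hij : i = j <;> simp [hij] <;> ring
  refine hp (eq_zero_of_natDegree_lt_card_of_eval_eq_zero' p (univ.erase 0)
    (fun t ht => (heval t).trans (h t (ne_of_mem_erase ht))) ?_)
  rw [card_erase_of_mem (mem_univ _), card_univ]
  omega

theorem Matrix.mulVec_mem_range_of_rank_le {K m n : Type*} [Field K] [Fintype K] [Fintype m]
    [Fintype n] [DecidableEq m] [DecidableEq n] {M : Submodule K (Matrix m n K)}
    {A B : Matrix m n K} (hA : A ∈ M) (hmax : ∀ C ∈ M, C.rank ≤ A.rank)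
    (hcard : A.rank < Fintype.card K) (hB : B ∈ M) {v : n → K} (hv : A *ᵥ v = 0) :
    B *ᵥ v ∈ LinearMap.range A.mulVecLin := by
  by_contra hBv
  -- `B v = (A + t • B) *ᵥ (t⁻¹ • v)` is a nonzero vector in the range of `B` and of every
  -- `A + t • B` that `P` kills, so `P * B * U` and every `P * (A + t • B) * U` are singular.
  obtain ⟨P, U, hPAU, hPw⟩ := exists_mul_mul_eq_one_and_mulVec_eq_zero hBv
  have hBv0 : B *ᵥ v ≠ 0 := fun h => hBv (h ▸ Submodule.zero_mem _)
  obtain ⟨t, ht, hdet⟩ := exists_ne_zero_det_one_add_smul_ne_zero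
    (det_mul_mul_eq_zero_of_mulVec_eq_zero (U := U) hBv0 hPw (by simpa using hmax B hB))
    (by simpa using hcard)
  have hpencil : 1 + t • (P * B * U) = P * (A + t • B) * U := by
    rw [← hPAU, Matrix.mul_add, Matrix.add_mul, Matrix.mul_smul, Matrix.smul_mul]
  have hw : (A + t • B) *ᵥ (t⁻¹ • v) = B *ᵥ v := by
    rw [add_mulVec, mulVec_smul, mulVec_smul, hv, smul_zero, zero_add, smul_mulVec, smul_smul,
      inv_mul_cancel₀ ht, one_smul]
  rw [hpencil] at hdet
  refine hdet (det_mul_mul_eq_zero_of_mulVec_eq_zero (hw ▸ hBv0) (hw ▸ hPw) ?_)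
  simpa using hmax _ (M.add_mem hA (M.smul_mem t hB))

lemma LinearMap.card_filter_apply_eq_zero {K V U : Type*} [Field K] [Fintype K] [AddCommGroup V]
    [Module K V] [Fintype V] [AddCommGroup U] [Module K U] [DecidableEq U] (f : V →ₗ[K] U) :
    #{x | f x = 0} = Fintype.card K ^ (finrank K V - finrank K (range f)) := by
  rw [← Fintype.card_subtype, Fintype.card_eq_nat_card, Fintype.card_eq_nat_card,
    ← f.finrank_range_add_finrank_ker, Nat.add_sub_cancel_left, ← natCard_eq_pow_finrank]
  exact Nat.card_congr (Equiv.subtypeEquivRight fun x => mem_ker.symm)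

lemma Nat.pow_add_mul_lt {q n d r : ℕ} (hq : 2 ≤ q) (hr : 0 < r) (hrn : r ≤ n) (hnd : n < d) :
    q ^ n + (q ^ d - 1) * q ^ (n - r) < q ^ d + (q ^ n - 1) * q ^ (d - r) := by
  obtain ⟨a, ha⟩ : ∃ a, a = q ^ (d - r) := ⟨_, rfl⟩
  obtain ⟨b, hb⟩ : ∃ b, b = q ^ (n - r) := ⟨_, rfl⟩
  have hd : q ^ d = a * q ^ r := by rw [ha, ← pow_add, Nat.sub_add_cancel (by omega)]
  have hn : q ^ n = b * q ^ r := by rw [hb, ← pow_add, Nat.sub_add_cancel hrn]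
  have hba : b < a := by rw [ha, hb]; exact Nat.pow_lt_pow_right hq (by omega)
  have hc : q ≤ q ^ r := Nat.le_self_pow hr.ne' q
  have hb1 : 1 ≤ b := hb ▸ Nat.one_le_pow _ _ (by omega)
  rw [hd, hn, ← ha, ← hb]
  have h1 : 1 ≤ a * q ^ r := by nlinarith
  have h2 : 1 ≤ b * q ^ r := by nlinarith
  zify [h1, h2]
  nlinarith

theorem LinearMap.finrank_le_of_finrank_range_eq {K V W U : Type*} [Field K] [Fintype K]
    [AddCommGroup V] [Module K V] [Module.Finite K V] [AddCommGroup W] [Module K W]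
    [Module.Finite K W] [AddCommGroup U] [Module K U] (β : V →ₗ[K] W →ₗ[K] U) {r : ℕ}
    (hr : 0 < r) (hβ : ∀ x ≠ 0, finrank K (range (β x)) = r)
    (hflip : ∀ y, finrank K (range (β.flip y)) ≤ r) : finrank K V ≤ finrank K W := by
  classical
  by_contra! hWV
  have := Module.finite_of_finite K (M := V)
  have := Module.finite_of_finite K (M := W)
  let := Fintype.ofFinite V
  let := Fintype.ofFinite W
  set q := Fintype.card K
  have : Nontrivial V := Module.nontrivial_of_finrank_pos (R := K) (by omega)
  obtain ⟨x₀, hx₀⟩ := exists_ne (0 : V)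
  have hrW : r ≤ finrank K W := by
    rw [← hβ x₀ hx₀]; exact (β x₀).finrank_range_le
  have hswap : ∑ x : V, #{y | β x y = 0} = ∑ y : W, #{x | β x y = 0} := by
    simp only [card_filter]
    exact sum_comm
  have hrows : ∑ x : V, #{y | β x y = 0} =
      q ^ finrank K W + (q ^ finrank K V - 1) * q ^ (finrank K W - r) := by
    rw [← add_sum_erase _ _ (mem_univ 0), sum_congr rfl fun x hx => by
      rw [(β x).card_filter_apply_eq_zero, hβ x (ne_of_mem_erase hx)]]
    simp [card_erase_of_mem, card_eq_pow_finrank (K := K) (V := V),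
      card_eq_pow_finrank (K := K) (V := W), q]
  have hcols : q ^ finrank K V + (q ^ finrank K W - 1) * q ^ (finrank K V - r) ≤
      ∑ y : W, #{x | β x y = 0} := by
    rw [← add_sum_erase _ _ (mem_univ 0)]
    refine add_le_add (by simp [card_eq_pow_finrank (K := K) (V := V), q]) ?_
    have hcard : #(univ.erase (0 : W)) = q ^ finrank K W - 1 := by
      simp [card_erase_of_mem, card_eq_pow_finrank (K := K) (V := W), q]
    rw [← hcard, ← smul_eq_mul]
    refine card_nsmul_le_sum _ _ _ fun y _ => ?_
    calc q ^ (finrank K V - r)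
        ≤ q ^ (finrank K V - finrank K (range (β.flip y))) :=
          Nat.pow_le_pow_right Fintype.card_pos (by have := hflip y; omega)
      _ = #{x | β x y = 0} := ((β.flip y).card_filter_apply_eq_zero).symm
  rw [← hswap, hrows] at hcols
  exact (Nat.pow_add_mul_lt Fintype.one_lt_card hr hrW hWV).not_ge hcols

theorem stmt2_general (q n r : ℕ)
    (F : Type*) [Field F] [Fintype F] (hF : Fintype.card F = q)
    (hr1 : 1 ≤ r) (hqr : r + 1 ≤ q)
    (M : Submodule F (Matrix (Fin n) (Fin n) F))
    (hconst : ∀ A ∈ M, A ≠ 0 → Matrix.rank A = r) :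
    Module.finrank F M ≤ n := by
  by_contra! hnM
  let β : M →ₗ[F] (Fin n → F) →ₗ[F] (Fin n → F) := mulVecBilin F F ∘ₗ M.subtype
  have hβ : ∀ B ≠ 0, finrank F (LinearMap.range (β B)) = r :=
    fun B hB => hconst B B.2 (by simpa using hB)
  have hflip : ∀ v, finrank F (LinearMap.range (β.flip v)) ≤ r := by
    intro v
    obtain ⟨A, hAv, hA0⟩ := Submodule.exists_mem_ne_zero_of_ne_bot
      (LinearMap.ker_ne_bot_of_finrank_lt (f := β.flip v) (by simpa using hnM))
    have hA : (A : Matrix (Fin n) (Fin n) F).rank = r := hconst A A.2 (by simpa using hA0)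
    have hmax : ∀ C ∈ M, C.rank ≤ (A : Matrix (Fin n) (Fin n) F).rank := fun C hC => by
      rcases eq_or_ne C 0 with rfl | hC0
      · simp
      · rw [hA, hconst C hC hC0]
    have hrange : LinearMap.range (β.flip v) ≤
        LinearMap.range (A : Matrix (Fin n) (Fin n) F).mulVecLin := by
      rintro _ ⟨B, rfl⟩
      exact mulVec_mem_range_of_rank_le A.2 hmax (by omega) B.2 hAv
    exact hA ▸ Submodule.finrank_mono hrange
  have := LinearMap.finrank_le_of_finrank_range_eq β hr1 hβ hflip
  simp only [finrank_fin_fun] at this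
  omega

/-- Let q be a prime power and M a constant rank r subspace of M_n(F_q),
where 1 ≤ r ≤ n, and suppose q ≥ r + 1. Then dim M ≤ n. -/
theorem stmt2 (q n r : ℕ) (hq : IsPrimePow q)
    (F : Type*) [Field F] [Fintype F] (hF : Fintype.card F = q)
    (hr1 : 1 ≤ r) (hrn : r ≤ n) (hqr : r + 1 ≤ q)
    (M : Submodule F (Matrix (Fin n) (Fin n) F)) (hM : M ≠ ⊥)
    (hconst : ∀ A ∈ M, A ≠ 0 → Matrix.rank A = r) :
    Module.finrank F M ≤ n :=
  stmt2_general q n r F hF hr1 hqr M hconst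
end

section
/- Let K be a field, m ≤ n, and M a constant rank m subspace of M_{m×n}(K) (every nonzero element has full rank m). Then dim M ≤ n, with no restriction on the size of K. -/
/-!
Fix a row index `i`. A nonzero matrix of full row rank has linearly independent rows, so its
`i`-th row is nonzero; hence `A ↦ A i` is an injective linear map from `M` to `Kⁿ`.
-/

namespace Matrix

variable {K m n : Type*} [Field K] [Fintype m] [Fintype n]

theorem linearIndependent_row_of_rank_eq_card {A : Matrix m n K}
    (h : A.rank = Fintype.card m) : LinearIndependent K A.row := by
  rw [rank_eq_finrank_span_row] at h
  exact linearIndependent_iff_card_eq_finrank_span.mpr h.symm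

theorem row_ne_zero_of_rank_eq_card {A : Matrix m n K} (h : A.rank = Fintype.card m) (i : m) :
    A i ≠ 0 :=
  (linearIndependent_row_of_rank_eq_card h).ne_zero i

theorem finrank_le_card_of_forall_rank_eq_card (M : Submodule K (Matrix m n K))
    (hM : ∀ A ∈ M, A ≠ 0 → A.rank = Fintype.card m) :
    Module.finrank K M ≤ Fintype.card n := by
  rcases isEmpty_or_nonempty m with hm | hm
  · simp [Module.finrank_zero_of_subsingleton]
  · obtain ⟨i⟩ := hm
    let rowMap : M →ₗ[K] n → K := (LinearMap.proj i).comp M.subtype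
    have hinj : Function.Injective rowMap := by
      refine (injective_iff_map_eq_zero rowMap).mpr fun A hA => ?_
      by_contra hA0
      exact row_ne_zero_of_rank_eq_card (hM A A.2 (by simpa using hA0)) i hA
    simpa using LinearMap.finrank_le_finrank_of_injective hinj

end Matrix

theorem stmt4_general (K : Type*) [Field K] (m n : ℕ)
    (M : Submodule K (Matrix (Fin m) (Fin n) K))
    (hconst : ∀ A ∈ M, A ≠ 0 → Matrix.rank A = m) :
    Module.finrank K M ≤ n := by
  simpa using Matrix.finrank_le_card_of_forall_rank_eq_card M (by simpa using hconst)

/-- Let K be a field, m ≤ n, and M a constant rank m subspace of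
M_{m×n}(K) (every nonzero element has full rank m). Then dim M ≤ n,
with no restriction on the size of K. -/
theorem stmt4 (K : Type*) [Field K] (m n : ℕ) (hmn : m ≤ n)
    (M : Submodule K (Matrix (Fin m) (Fin n) K)) (hM : M ≠ ⊥)
    (hconst : ∀ A ∈ M, A ≠ 0 → Matrix.rank A = m) :
    Module.finrank K M ≤ n :=
  stmt4_general K m n M hconst
end

section
/- Let q ≥ 2 be an integer, n > r ≥ 1. There is no function r : S → ℤ defined on a set S of size q^n − 1 with r(u) ≥ n + 1 − r for all u ∈ S, such that q^{2n+1−r} − q^{n−r} − q^{n+1} + q^n = Σ_{u ∈ S} q^{r(u)}. -/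
/-!
Every exponent on the right-hand side is at least `n + 1 - r`, so `q ^ (n + 1 - r)` divides it.
On the left, every term except `-q ^ (n - r)` has exponent at least `n + 1 - r`, so the
left-hand side is not divisible by `q ^ (n + 1 - r)`.
-/

theorem not_pow_succ_dvd_sub_pow {R : Type*} [CommRing R] [IsDomain R] {a x : R} (ha₀ : a ≠ 0)
    (ha : ¬IsUnit a) {k : ℕ} (hx : a ^ (k + 1) ∣ x) : ¬a ^ (k + 1) ∣ x - a ^ k := by
  intro h
  have hk : a ^ (k + 1) ∣ a ^ k := by simpa using dvd_sub hx h
  exact absurd ((pow_dvd_pow_iff ha₀ ha).1 hk) (Nat.not_succ_le_self k)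

theorem pow_dvd_sum_pow {ι R : Type*} [CommSemiring R] (s : Finset ι) (a : R) {k : ℕ}
    {f : ι → ℕ} (hf : ∀ i ∈ s, k ≤ f i) : a ^ k ∣ ∑ i ∈ s, a ^ f i :=
  Finset.dvd_sum fun i hi => pow_dvd_pow a (hf i hi)

theorem stmt10_general (q n r : ℕ) (hq : 2 ≤ q) (hr1 : 1 ≤ r) (hrn : r < n)
    (S : Type*) [Fintype S]
    (f : S → ℕ) (hf : ∀ u : S, n + 1 - r ≤ f u) :
    (q : ℤ) ^ (2 * n + 1 - r) - (q : ℤ) ^ (n - r) - (q : ℤ) ^ (n + 1) + (q : ℤ) ^ n ≠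
      ∑ u : S, (q : ℤ) ^ (f u) := by
  have hq₀ : (q : ℤ) ≠ 0 := by positivity
  have hq₁ : ¬IsUnit (q : ℤ) := by rw [Int.isUnit_iff]; omega
  have hdvd : ∀ m, n + 1 - r ≤ m → (q : ℤ) ^ (n - r + 1) ∣ (q : ℤ) ^ m :=
    fun m hm => pow_dvd_pow _ (by omega)
  have hlhs : ¬(q : ℤ) ^ (n - r + 1) ∣
      (q : ℤ) ^ (2 * n + 1 - r) - (q : ℤ) ^ (n - r) - (q : ℤ) ^ (n + 1) + (q : ℤ) ^ n := by
    rw [show ∀ a b c d : ℤ, a - b - c + d = a - c + d - b by intros; ring]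
    refine not_pow_succ_dvd_sub_pow hq₀ hq₁ (dvd_add (dvd_sub ?_ ?_) ?_) <;> apply hdvd <;> omega
  have hrhs : (q : ℤ) ^ (n - r + 1) ∣ ∑ u : S, (q : ℤ) ^ (f u) :=
    pow_dvd_sum_pow _ _ fun u _ => by have := hf u; omega
  exact fun h => hlhs (h ▸ hrhs)

/-- Let q ≥ 2 be an integer, n > r ≥ 1. There is no function
f : S → ℕ on a set S of size q^n − 1 with f(u) ≥ n + 1 − r for all u ∈ S, such that
q^{2n+1−r} − q^{n−r} − q^{n+1} + q^n = Σ_{u ∈ S} q^{f(u)}. -/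
theorem stmt10 (q n r : ℕ) (hq : 2 ≤ q) (hr1 : 1 ≤ r) (hrn : r < n)
    (S : Type*) [Fintype S] (hS : Fintype.card S = q ^ n - 1)
    (f : S → ℕ) (hf : ∀ u : S, n + 1 - r ≤ f u) :
    (q : ℤ) ^ (2 * n + 1 - r) - (q : ℤ) ^ (n - r) - (q : ℤ) ^ (n + 1) + (q : ℤ) ^ n ≠
      ∑ u : S, (q : ℤ) ^ (f u) :=
  stmt10_general q n r hq hr1 hrn S f hf
end

section
/- Let q be a prime power, m ≤ n, and 1 ≤ r ≤ m. Then M_{m×n}(F_q) contains a constant rank r subspace of dimension n (so the bound dim M ≤ n from the main theorem is optimal over finite fields). -/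
/-!
Let `E` be a division algebra of dimension `n` over `K` (for `K = 𝔽_q`, the field `𝔽_{q^n}`)
and `π : E → K^m` a linear map of rank `r`. The maps `y ↦ π (x * y)`, `x ∈ E`, form an
`n`-dimensional space, and for `x ≠ 0` left multiplication by `x` is bijective, so each of
them has the same image as `π`, hence rank `r`.
-/

open Module LinearMap

theorem LinearMap.rank_toMatrix {K V W : Type*} [Field K] [AddCommGroup V] [Module K V]
    [AddCommGroup W] [Module K W] {ι κ : Type*} [Fintype ι] [Fintype κ] [DecidableEq ι]
    (b : Basis ι K V) (c : Basis κ K W) (f : V →ₗ[K] W) :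
    (toMatrix b c f).rank = finrank K (range f) := by
  rw [Matrix.rank_eq_finrank_range_toLin _ c b, Matrix.toLin_toMatrix]

theorem exists_linearMap_finrank_range_eq {K V W : Type*} [Field K] [AddCommGroup V]
    [Module K V] [AddCommGroup W] [Module K W] {r : ℕ}
    (hV : r ≤ finrank K V) (hW : r ≤ finrank K W) :
    ∃ f : V →ₗ[K] W, finrank K (range f) = r := by
  obtain ⟨v, hv⟩ := exists_linearIndependent_of_le_finrank hV
  obtain ⟨w, hw⟩ := exists_linearIndependent_of_le_finrank hW
  rw [linearIndependent_iff_injective_fintypeLinearCombination] at hv hw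
  obtain ⟨g, hg⟩ := (Fintype.linearCombination K v).exists_leftInverse_of_injective
    (ker_eq_bot.mpr hv)
  have hg_surj : range g = ⊤ :=
    range_eq_top.mpr fun y => ⟨Fintype.linearCombination K v y, DFunLike.congr_fun hg y⟩
  refine ⟨Fintype.linearCombination K w ∘ₗ g, ?_⟩
  rw [range_comp_of_range_eq_top _ hg_surj, finrank_range_of_inj hw, finrank_fin_fun]

section
variable {K E W : Type*} [CommRing K] [DivisionRing E] [Algebra K E] [AddCommGroup W]
  [Module K W]

theorem range_comp_mulLeft (π : E →ₗ[K] W) {x : E} (hx : x ≠ 0) :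
    range (π ∘ₗ mulLeft K x) = range π :=
  range_comp_of_range_eq_top π (range_eq_top.mpr fun y => ⟨x⁻¹ * y, by simp [hx]⟩)

theorem injective_compr₂_mul (π : E →ₗ[K] W) (hπ : π ≠ 0) :
    Function.Injective ((mul K E).compr₂ π) := by
  refine (injective_iff_map_eq_zero _).mpr fun x hx => ?_
  by_contra hx0
  apply hπ
  rw [← range_eq_bot, ← range_comp_mulLeft π hx0]
  exact (show π ∘ₗ mulLeft K x = 0 from hx) ▸ range_zero
end

theorem exists_submodule_matrix_finrank_eq_forall_rank_eq {K E : Type*} [Field K]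
    [DivisionRing E] [Algebra K E] {m n r : ℕ} (hE : finrank K E = n) (hr : r ≠ 0)
    (hrm : r ≤ m) (hrn : r ≤ n) :
    ∃ M : Submodule K (Matrix (Fin m) (Fin n) K),
      finrank K M = n ∧ ∀ A ∈ M, A ≠ 0 → A.rank = r := by
  have : FiniteDimensional K E := Module.finite_of_finrank_pos (R := K) (M := E) (by omega)
  obtain ⟨π, hπ⟩ := exists_linearMap_finrank_range_eq (K := K) (V := E) (W := Fin m → K)
    (r := r) (by omega) (by simpa using hrm)
  have hπ0 : π ≠ 0 := by
    rintro rfl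
    rw [LinearMap.range_zero, finrank_bot] at hπ
    exact hr hπ.symm
  let b := finBasisOfFinrankEq K E hE
  let Φ := (toMatrix b (Pi.basisFun K (Fin m))).toLinearMap ∘ₗ (mul K E).compr₂ π
  refine ⟨range Φ, ?_, ?_⟩
  · have hΦ : Function.Injective Φ :=
      (LinearEquiv.injective (toMatrix b _)).comp (injective_compr₂_mul π hπ0)
    rw [finrank_range_of_inj hΦ, hE]
  · rintro _ ⟨x, rfl⟩ hA
    have hx : x ≠ 0 := by
      rintro rfl
      exact hA (map_zero Φ)
    change (toMatrix b _ (π ∘ₗ mulLeft K x)).rank = r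
    rw [LinearMap.rank_toMatrix, range_comp_mulLeft π hx, hπ]

theorem stmt12_general (m n r : ℕ)
    (F : Type*) [Field F] [Fintype F]
    (hmn : m ≤ n) (hr1 : 1 ≤ r) (hrm : r ≤ m) :
    ∃ M : Submodule F (Matrix (Fin m) (Fin n) F),
      Module.finrank F M = n ∧ ∀ A ∈ M, A ≠ 0 → Matrix.rank A = r := by
  obtain ⟨p, _⟩ := CharP.exists F
  have : Fact p.Prime := ⟨CharP.char_is_prime F p⟩
  have : NeZero n := ⟨by omega⟩
  exact exists_submodule_matrix_finrank_eq_forall_rank_eq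
    (FiniteField.finrank_extension F p n) (by omega) hrm (hrm.trans hmn)

/-- Let q be a prime power, m ≤ n, and 1 ≤ r ≤ m. Then M_{m×n}(F_q)
contains a constant rank r subspace of dimension n. -/
theorem stmt12 (q m n r : ℕ) (hq : IsPrimePow q)
    (F : Type*) [Field F] [Fintype F] (hF : Fintype.card F = q)
    (hmn : m ≤ n) (hr1 : 1 ≤ r) (hrm : r ≤ m) :
    ∃ M : Submodule F (Matrix (Fin m) (Fin n) F),
      Module.finrank F M = n ∧ ∀ A ∈ M, A ≠ 0 → Matrix.rank A = r :=
  stmt12_general m n r F hmn hr1 hrm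
end

section
/- Let q be any prime power and M a constant rank r subspace of M_{m×n}(F_q) with m ≤ n and 1 ≤ r ≤ m. Then dim M ≤ m + n − r. -/
/-!
Double count the pairs `(B, x) ∈ M × F^n` with `B x = 0`. The zero matrix contributes `q^n`
and every other `B` has a kernel of size `q^(n-r)`, so the count is `q^n + (q^D - 1) q^(n-r)`
with `D = dim M`. For fixed `x` the matrices of `M` killing `x` form the kernel of a linear map
`M → F^m`, so each count over `x` is divisible by `q^(D-m)`. If `D > m + n - r`, then
`q^(n-r+1)` divides the total and `q^n`, hence `(q^D - 1) q^(n-r)`, forcing `q ∣ q^D - 1`.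
-/

open Module LinearMap

section DoubleCounting

variable {R V W U : Type*} [CommSemiring R] [AddCommMonoid V] [AddCommMonoid W]
  [AddCommMonoid U] [Module R V] [Module R W] [Module R U]

theorem LinearMap.sum_natCard_ker_eq_sum_natCard_ker_flip [Fintype V] [Fintype W]
    (Φ : V →ₗ[R] W →ₗ[R] U) :
    ∑ v, Nat.card (ker (Φ v)) = ∑ w, Nat.card (ker (Φ.flip w)) := by
  classical
  simp only [Nat.card_eq_fintype_card, mem_ker, Fintype.card_subtype, Finset.card_filter,
    flip_apply]
  exact Finset.sum_comm

end DoubleCounting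

section FiniteField

variable {K V W U : Type*} [Field K] [AddCommGroup V] [AddCommGroup W]
  [AddCommGroup U] [Module K V] [Module K W] [Module K U]
  [FiniteDimensional K V] [FiniteDimensional K W] [FiniteDimensional K U]

theorem LinearMap.pow_finrank_sub_dvd_natCard_ker (f : V →ₗ[K] U) :
    Nat.card K ^ (finrank K V - finrank K U) ∣ Nat.card (ker f) := by
  rw [natCard_eq_pow_finrank (K := K) (V := ker f)]
  refine pow_dvd_pow (Nat.card K) ?_
  have := f.finrank_range_add_finrank_ker
  have := (range f).finrank_le
  omega

theorem finrank_le_of_forall_finrank_ker_eq [Finite K] (Φ : V →ₗ[K] W →ₗ[K] U) {k : ℕ}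
    (hk : k < finrank K W) (hker : ∀ v ≠ 0, finrank K (ker (Φ v)) = k) :
    finrank K V ≤ finrank K U + k := by
  classical
  have := Fintype.ofFinite K
  have := Module.finite_of_finite K (M := V)
  have := Fintype.ofFinite V
  have := Module.finite_of_finite K (M := W)
  have := Fintype.ofFinite W
  set q := Nat.card K
  by_contra! hlt
  have hq : 1 < q := Finite.one_lt_card
  have hrow : ∑ v, Nat.card (ker (Φ v)) = q ^ finrank K W + (q ^ finrank K V - 1) * q ^ k := by
    rw [← Finset.add_sum_erase _ _ (Finset.mem_univ 0), map_zero, ker_zero,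
      natCard_eq_pow_finrank (K := K) (V := (⊤ : Submodule K W)), finrank_top,
      Finset.sum_congr rfl fun v hv => by
        rw [natCard_eq_pow_finrank (K := K) (V := ker (Φ v)), hker v (Finset.ne_of_mem_erase hv)],
      Finset.sum_const, Finset.card_erase_of_mem (Finset.mem_univ 0), Finset.card_univ,
      ← Nat.card_eq_fintype_card, natCard_eq_pow_finrank (K := K) (V := V), smul_eq_mul]
  have hcol : q ^ (k + 1) ∣ ∑ v, Nat.card (ker (Φ v)) := by
    rw [Φ.sum_natCard_ker_eq_sum_natCard_ker_flip]
    exact Finset.dvd_sum fun w _ =>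
      (pow_dvd_pow q (by omega)).trans (Φ.flip w).pow_finrank_sub_dvd_natCard_ker
  rw [hrow, Nat.dvd_add_right (pow_dvd_pow q hk), pow_succ'] at hcol
  have hdvd_pred : q ∣ q ^ finrank K V - 1 := Nat.dvd_of_mul_dvd_mul_right (by positivity) hcol
  have hdvd_pow : q ∣ q ^ finrank K V := dvd_pow_self q (by omega)
  have hdvd_one := Nat.dvd_sub hdvd_pow hdvd_pred
  rw [Nat.sub_sub_self (Nat.one_le_pow _ _ (zero_lt_one.trans hq))] at hdvd_one
  exact hq.ne' (Nat.dvd_one.mp hdvd_one)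

end FiniteField

theorem Submodule.finrank_add_le_of_forall_rank_eq {ι κ F : Type*} [Fintype ι] [Fintype κ]
    [DecidableEq κ] [Field F] [Finite F] {M : Submodule F (Matrix ι κ F)} {r : ℕ} (hM : M ≠ ⊥)
    (hconst : ∀ A ∈ M, A ≠ 0 → A.rank = r) :
    finrank F M + r ≤ Fintype.card ι + Fintype.card κ := by
  obtain ⟨A, hAM, hA⟩ := Submodule.exists_mem_ne_zero_of_ne_bot hM
  have hker : ∀ B ∈ M, B ≠ 0 → finrank F (ker (Matrix.toLin' B)) = Fintype.card κ - r := by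
    intro B hBM hB
    have hrank : finrank F (range (Matrix.toLin' B)) = r := by
      rw [Matrix.toLin'_apply']
      exact hconst B hBM hB
    have := (Matrix.toLin' B).finrank_range_add_finrank_ker
    rw [finrank_fintype_fun_eq_card] at this
    omega
  have hk : Fintype.card κ - r < finrank F (κ → F) := by
    rw [← hker A hAM hA]
    have hA' : Matrix.toLin' A ≠ 0 := (map_ne_zero_iff _ Matrix.toLin'.injective).mpr hA
    exact Submodule.finrank_lt (mt ker_eq_top.mp hA')
  have hdim := finrank_le_of_forall_finrank_ker_eq (Matrix.toLin'.toLinearMap ∘ₗ M.subtype) hk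
    fun B hB => by
      have := hker B B.2 (Subtype.coe_ne_coe.mpr hB)
      rwa [LinearMap.comp_apply, Submodule.subtype_apply, LinearEquiv.coe_coe]
  have hr : r ≤ Fintype.card κ := hconst A hAM hA ▸ A.rank_le_card_width
  rw [finrank_fintype_fun_eq_card] at hdim
  omega

theorem stmt13_general (m n r : ℕ)
    (F : Type*) [Field F] [Fintype F]
    (M : Submodule F (Matrix (Fin m) (Fin n) F)) (hM : M ≠ ⊥)
    (hconst : ∀ A ∈ M, A ≠ 0 → Matrix.rank A = r) :
    Module.finrank F M ≤ m + n - r := by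
  have := Submodule.finrank_add_le_of_forall_rank_eq hM hconst
  rw [Fintype.card_fin, Fintype.card_fin] at this
  omega

/-- Let q be any prime power and M a constant rank r subspace of
M_{m×n}(F_q) with m ≤ n and 1 ≤ r ≤ m. Then dim M ≤ m + n − r. -/
theorem stmt13 (q m n r : ℕ) (hq : IsPrimePow q)
    (F : Type*) [Field F] [Fintype F] (hF : Fintype.card F = q)
    (hmn : m ≤ n) (hr1 : 1 ≤ r) (hrm : r ≤ m)
    (M : Submodule F (Matrix (Fin m) (Fin n) F)) (hM : M ≠ ⊥)
    (hconst : ∀ A ∈ M, A ≠ 0 → Matrix.rank A = r) :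
    Module.finrank F M ≤ m + n - r :=
  stmt13_general m n r F M hM hconst
end

section
/- Let K be a field with |K| ≥ r + 1 and M a constant rank r subspace of M_n(K) with dim M > n. Then for every nonzero u ∈ K^n, there exists a nonzero A ∈ M with Au = 0, and moreover dim {Bu : B ∈ M} ≤ r. -/
/-!
Choose a nonzero `A ∈ M` with `A u = 0`: the map `B ↦ B u` sends `M` into `K^n` and `dim M > n`.
For `B ∈ M` every `t A + B` lies in `M`, hence has rank at most `r = rank A`. If `B u ∉ im A`,
pick `v₁, …, v_r` with the `A vᵢ` independent. Modulo the line through `w = B u` the vectors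
`(t A + B) vᵢ` are independent unless `t` is a root of the degree-`r` polynomial `det (t + B')`
for a suitable `r × r` matrix `B'`, so for some of the `r + 1` available scalars they are; together
with `w = (t A + B) u` they give `r + 1` independent vectors in `im (t A + B)`. Hence
`B u ∈ im A` for all `B ∈ M`, and `{B u : B ∈ M}` has dimension at most `r`.
-/

open Cardinal Module LinearMap

section

variable {K V U : Type*} [Field K] [AddCommGroup V] [Module K V] [AddCommGroup U] [Module K U]
  {ι : Type*} [Fintype ι] [DecidableEq ι]

theorem Matrix.exists_det_smul_one_add_ne_zero (B : Matrix ι ι K)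
    (hK : (Fintype.card ι : Cardinal) < #K) :
    ∃ t : K, (t • (1 : Matrix ι ι K) + B).det ≠ 0 := by
  obtain ⟨t, ht⟩ := (-B).charpoly.exists_eval_ne_zero_of_natDegree_lt_card
    (Matrix.charpoly_monic _).ne_zero (by rwa [Matrix.charpoly_natDegree_eq_dim])
  refine ⟨t, ?_⟩
  rwa [Matrix.eval_charpoly, Matrix.scalar_apply, sub_neg_eq_add,
    ← Matrix.smul_one_eq_diagonal] at ht

theorem LinearIndependent.exists_linearMap_apply_eq_single {f : ι → U}
    (hf : LinearIndependent K f) :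
    ∃ ρ : U →ₗ[K] ι → K, ∀ i, ρ (f i) = Pi.single i 1 := by
  obtain ⟨ρ, hρ⟩ := (Fintype.linearCombination K f).exists_leftInverse_of_injective
    (LinearMap.ker_eq_bot.mpr hf.fintypeLinearCombination_injective)
  refine ⟨ρ, fun i => ?_⟩
  simpa [Fintype.linearCombination_apply_single] using
    LinearMap.congr_fun hρ (Pi.single i 1)

theorem LinearIndependent.exists_linearIndependent_smul_add {a : ι → U}
    (ha : LinearIndependent K a) (b : ι → U) (hK : (Fintype.card ι : Cardinal) < #K) :
    ∃ t : K, LinearIndependent K (t • a + b) := by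
  -- in the coordinates `ρ` dual to `a`, `t • a + b` becomes the rows of `t • 1 + B'`
  obtain ⟨ρ, hρ⟩ := ha.exists_linearMap_apply_eq_single
  obtain ⟨t, ht⟩ := (Matrix.of fun i => ρ (b i)).exists_det_smul_one_add_ne_zero hK
  refine ⟨t, LinearIndependent.of_comp ρ ?_⟩
  have hrows := Matrix.linearIndependent_rows_iff_isUnit.mpr
    ((Matrix.isUnit_iff_isUnit_det _).mpr ht.isUnit)
  convert hrows using 1
  ext i j
  simp [hρ, Matrix.one_apply, Pi.single_apply, eq_comm]

theorem linearIndependent_finSnoc_of_comp {X : Type*} [AddCommGroup X] [Module K X] {r : ℕ}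
    {g : Fin r → U} {w : U} (f : U →ₗ[K] X) (hg : LinearIndependent K (f ∘ g))
    (hfw : f w = 0) (hw : w ≠ 0) : LinearIndependent K (Fin.snoc g w : Fin (r + 1) → U) := by
  refine linearIndependent_finSnoc.mpr ⟨hg.of_comp, fun hmem => hw ?_⟩
  obtain ⟨c, rfl⟩ := (Submodule.mem_span_range_iff_exists_fun K).mp hmem
  have hc := Fintype.linearIndependent_iff.mp hg c (by simpa using hfw)
  simp [hc]

theorem LinearMap.exists_linearIndependent_comp (A : V →ₗ[K] U)
    [FiniteDimensional K (range A)] :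
    ∃ v : Fin (finrank K (range A)) → V, LinearIndependent K (A ∘ v) := by
  let b := Module.finBasis K (range A)
  choose v hv using fun i => LinearMap.mem_range.mp (b i).2
  have hAv : A ∘ v = (range A).subtype ∘ b := funext hv
  exact ⟨v, hAv ▸ b.linearIndependent.map' _ (Submodule.ker_subtype _)⟩

theorem LinearMap.apply_mem_range_of_finrank_range_smul_add_le [FiniteDimensional K U]
    {A B : V →ₗ[K] U} (hK : (finrank K (range A) : Cardinal) < #K)
    (hrank : ∀ t : K, finrank K (range (t • A + B)) ≤ finrank K (range A))
    {x : V} (hx : A x = 0) : B x ∈ range A := by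
  by_contra hw
  obtain ⟨v, hv⟩ := A.exists_linearIndependent_comp
  have hBx : B x ≠ 0 := fun h => hw (h ▸ (range A).zero_mem)
  let q := (K ∙ B x).mkQ
  have hqA : LinearIndependent K (q ∘ A ∘ v) := by
    refine hv.map ?_
    rw [Submodule.ker_mkQ, Submodule.disjoint_span_singleton' hBx]
    exact fun h => hw (Submodule.span_le.mpr
      (Set.range_subset_iff.mpr fun i => mem_range_self A (v i)) h)
  obtain ⟨t, ht⟩ := hqA.exists_linearIndependent_smul_add (q ∘ B ∘ v) (by simpa using hK)
  have hC : LinearIndependent K (Fin.snoc ((t • A + B) ∘ v) (B x) : Fin _ → U) := by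
    refine linearIndependent_finSnoc_of_comp q ?_ (by simp [q]) hBx
    convert ht using 1
    ext i
    simp
  have hle : Submodule.span K (Set.range (Fin.snoc ((t • A + B) ∘ v) (B x) : Fin _ → U)) ≤
      range (t • A + B) := by
    refine Submodule.span_le.mpr (Set.range_subset_iff.mpr fun i => ?_)
    cases i using Fin.lastCases with
    | last => exact ⟨x, by simp [hx]⟩
    | cast i => exact ⟨v i, by simp⟩
  have := Submodule.finrank_mono hle
  rw [finrank_span_eq_card hC, Fintype.card_fin] at this
  exact (hrank t).not_gt this

end

theorem Matrix.mulVecLin_smul {R m n : Type*} [CommSemiring R] [Fintype n] (t : R)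
    (A : Matrix m n R) : (t • A).mulVecLin = t • A.mulVecLin :=
  map_smul (mulVecBilin R R) t A

open Matrix in
theorem stmt14_general (K : Type*) [Field K] (n r : ℕ)
    (hK : (r + 1 : Cardinal) ≤ Cardinal.mk K)
    (M : Submodule K (Matrix (Fin n) (Fin n) K))
    (hconst : ∀ A ∈ M, A ≠ 0 → Matrix.rank A = r)
    (hdim : n < Module.finrank K M)
    (u : Fin n → K) :
    (∃ A ∈ M, A ≠ 0 ∧ A.mulVec u = 0) ∧
      Module.finrank K ↥(Submodule.map (mulVecRight K n u) M) ≤ r := by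
  obtain ⟨⟨A, hAM⟩, hAu, hA0⟩ := Submodule.exists_mem_ne_zero_of_ne_bot
    (ker_ne_bot_of_finrank_lt (f := (mulVecRight K n u).domRestrict M) (by simpa using hdim))
  replace hA0 : A ≠ 0 := fun h => hA0 (Subtype.ext h)
  replace hAu : A *ᵥ u = 0 := hAu
  have hrA : finrank K (range A.mulVecLin) = r := hconst A hAM hA0
  have hrank (B) (hB : B ∈ M) (t : K) :
      finrank K (range (t • A.mulVecLin + B.mulVecLin)) ≤ r := by
    rw [← mulVecLin_smul, ← mulVecLin_add]
    by_cases h0 : t • A + B = 0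
    · rw [h0, mulVecLin_zero, range_zero, finrank_bot]
      exact r.zero_le
    · exact (hconst _ (M.add_mem (M.smul_mem t hAM) hB) h0).le
  refine ⟨⟨A, hAM, hA0, hAu⟩, hrA ▸ Submodule.finrank_mono ?_⟩
  rintro _ ⟨B, hB, rfl⟩
  exact A.mulVecLin.apply_mem_range_of_finrank_range_smul_add_le
    (hrA ▸ natCast_add_one_le_iff.mp hK) (hrA ▸ hrank B hB) hAu

/-- Let K be a field with |K| ≥ r + 1 and M a constant rank r subspace
of M_n(K) with dim M > n. Then for every nonzero u ∈ K^n there exists a nonzero A ∈ M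
with Au = 0, and moreover dim {Bu : B ∈ M} ≤ r. -/
theorem stmt14 (K : Type*) [Field K] (n r : ℕ)
    (hK : (r + 1 : Cardinal) ≤ Cardinal.mk K)
    (M : Submodule K (Matrix (Fin n) (Fin n) K)) (hM : M ≠ ⊥)
    (hconst : ∀ A ∈ M, A ≠ 0 → Matrix.rank A = r)
    (hdim : n < Module.finrank K M)
    (u : Fin n → K) (hu : u ≠ 0) :
    (∃ A ∈ M, A ≠ 0 ∧ A.mulVec u = 0) ∧
      Module.finrank K ↥(Submodule.map (mulVecRight K n u) M) ≤ r :=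
  stmt14_general K n r hK M hconst hdim u
end
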